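/- arXiv:2408.11153 — 3 statements merged into one kernel-verified Lean document; each statement's English description precedes it below -/
import Mathlib

section
/- Let $T$ be a bounded operator on a Banach space $X$. The unilateral shift $B_T$ on $\ell^p(X,\mathbb{N})$ (or $c_0(X,\mathbb{N})$) is mixing if and only if for every non-empty open set $U\subseteq X$, the set $N_T(B_X(0,1),U) = \{n\ge 0 : T^n(B_X(0,1))\cap U\ne\emptyset\}$ is cofinite. In particular, if $T$ is mixing on $X$, then $B_T$ is mixing. -/
open Filter Topology ENNReal

section Defs
variable {Y : Type*} [TopologicalSpace Y]

/-- A map is hypercyclic if some point has dense orbit. -/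
def Hypercyclic (f : Y → Y) : Prop := ∃ y : Y, Dense (Set.range fun n : ℕ => f^[n] y)

/-- Topological transitivity. -/
def TopologicallyTransitive (f : Y → Y) : Prop :=
  ∀ U V : Set Y, IsOpen U → IsOpen V → U.Nonempty → V.Nonempty →
    ∃ n : ℕ, (f^[n] '' U ∩ V).Nonempty

/-- Topological mixing: return sets of pairs of non-empty open sets are cofinite. -/
def TopologicallyMixing (f : Y → Y) : Prop :=
  ∀ U V : Set Y, IsOpen U → IsOpen V → U.Nonempty → V.Nonempty →
    ∃ N : ℕ, ∀ n ≥ N, (f^[n] '' U ∩ V).Nonempty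

/-- Weak mixing: `f ⊕ f` is hypercyclic. -/
def WeaklyMixing (f : Y → Y) : Prop := Hypercyclic (fun q : Y × Y => (f q.1, f q.2))

/-- Chaos in the sense of Devaney: hypercyclic with a dense set of periodic points. -/
def Chaotic (f : Y → Y) : Prop :=
  Hypercyclic f ∧ Dense {y : Y | ∃ d : ℕ, 1 ≤ d ∧ f^[d] y = y}

/-- Lower density of a set of natural numbers. -/
noncomputable def lowerDensity (A : Set ℕ) : ℝ :=
  Filter.liminf
    (fun N : ℕ => (∑ n ∈ Finset.range N, Set.indicator A (fun _ => (1 : ℝ)) n) / N)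
    Filter.atTop

/-- Frequent hypercyclicity: some orbit visits every non-empty open set along a set of
positive lower density. -/
def FrequentlyHypercyclic (f : Y → Y) : Prop :=
  ∃ y : Y, ∀ U : Set Y, IsOpen U → U.Nonempty → 0 < lowerDensity {n : ℕ | f^[n] y ∈ U}

end Defs

/-- The `c₀`-sum of a family of normed spaces, realised as a submodule of `lp E ∞`:
those bounded families whose norms tend to `0` along the cofinite filter. -/
noncomputable def c0Sum {ι : Type*} (E : ι → Type*) [∀ i, NormedAddCommGroup (E i)]
    [∀ i, NormedSpace ℝ (E i)] : Submodule ℝ (lp E ∞) where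
  carrier := {x | Tendsto (fun i => ‖(x : ∀ i, E i) i‖) cofinite (nhds 0)}
  add_mem' := by
    intro a b ha hb
    refine squeeze_zero (fun i => norm_nonneg _) (fun i => ?_) (by simpa using ha.add hb)
    simp only [lp.coeFn_add, Pi.add_apply]
    exact norm_add_le _ _
  zero_mem' := by
    simp only [Set.mem_setOf_eq, lp.coeFn_zero, Pi.zero_apply, norm_zero]
    exact tendsto_const_nhds
  smul_mem' := by
    intro c a ha
    have h : Tendsto (fun i => ‖c‖ * ‖(a : ∀ i, E i) i‖) cofinite (nhds 0) := by
      simpa using ha.const_mul ‖c‖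
    refine squeeze_zero (fun i => norm_nonneg _) (fun i => ?_) h
    simp only [lp.coeFn_smul, Pi.smul_apply]
    exact (norm_smul c _).le

/-- The identity, as a continuous linear map between equal members of a family of spaces. -/
def castL (E : ℤ → Type*) [∀ k, NormedAddCommGroup (E k)] [∀ k, NormedSpace ℝ (E k)]
    {j k : ℤ} (h : j = k) : E j →L[ℝ] E k := by
  subst h; exact ContinuousLinearMap.id ℝ (E j)

/-- The composite `T_{j,j+n} = T_{j+1} ∘ ⋯ ∘ T_{j+n} : E (j+n) → E j` (here `T k` denotes
the operator `E (k+1) → E k`). -/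
noncomputable def iterComp {E : ℤ → Type*} [∀ k, NormedAddCommGroup (E k)]
    [∀ k, NormedSpace ℝ (E k)] (T : ∀ k : ℤ, E (k + 1) →L[ℝ] E k) :
    ∀ (j : ℤ) (n : ℕ), E (j + n) →L[ℝ] E j
  | j, 0 => castL E (by simp)
  | j, (n + 1) => (iterComp T j n).comp ((T (j + n)).comp (castL E (by push_cast; ring)))

/-! Both sums are handled through their coordinates, their unit vectors and the density of
finitely supported sequences. Since `(B^n x)_0 = T^n x_n` and `‖x_n‖ ≤ ‖x‖`, mixing of `B` forces
`T^n (B_X(0,1))` to meet every non-empty open set for all large `n`. Conversely, approximate `u`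
and `v` by sequences supported on finite sets `s` and `t`. By homogeneity the condition holds for
balls of any radius, so for `n` large (in particular beyond `s`) there are small `a_k`, `k ∈ t`,
with `T^n a_k` close to `v_k`. Placing `a_k` at position `n + k` perturbs `u` only slightly, and
`B^n` sends the result to `(T^n a_k)_{k ∈ t}`, which is close to `v`. -/

section Mixing

variable {Y : Type*}

lemma topologicallyMixing_of_forall_dist [PseudoMetricSpace Y] {f : Y → Y}
    (h : ∀ u v : Y, ∀ ε > 0, ∀ᶠ n in atTop, ∃ x, dist x u < ε ∧ dist (f^[n] x) v < ε) :
    TopologicallyMixing f := by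
  intro U V hU hV ⟨u, hu⟩ ⟨v, hv⟩
  obtain ⟨εU, hεU, hUball⟩ := Metric.isOpen_iff.mp hU u hu
  obtain ⟨εV, hεV, hVball⟩ := Metric.isOpen_iff.mp hV v hv
  obtain ⟨N, hN⟩ := eventually_atTop.mp (h u v (min εU εV) (lt_min hεU hεV))
  refine ⟨N, fun n hn => ?_⟩
  obtain ⟨x, hxu, hxv⟩ := hN n hn
  exact ⟨f^[n] x, Set.mem_image_of_mem _ (hUball (hxu.trans_le (min_le_left _ _))),
    hVball (hxv.trans_le (min_le_right _ _))⟩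

end Mixing

section UnitBallMixing

variable {X : Type*} [NormedAddCommGroup X] [NormedSpace ℝ X]

/-- The paper's condition: `N_T(B_X(0,1), U)` is cofinite for every non-empty open `U`. -/
def UnitBallMixing (T : X →L[ℝ] X) : Prop :=
  ∀ U : Set X, IsOpen U → U.Nonempty →
    {n : ℕ | ¬ ((⇑T)^[n] '' Metric.ball (0 : X) 1 ∩ U).Nonempty}.Finite

lemma TopologicallyMixing.unitBallMixing {T : X →L[ℝ] X} (hT : TopologicallyMixing ⇑T) :
    UnitBallMixing T := by
  intro U hU hUne
  obtain ⟨N, hN⟩ := hT _ U Metric.isOpen_ball hU ⟨0, Metric.mem_ball_self one_pos⟩ hUne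
  exact (Set.finite_Iio N).subset fun n hn => lt_of_not_ge fun h => hn (hN n h)

lemma ContinuousLinearMap.iterate_map_smul (T : X →L[ℝ] X) (n : ℕ) (r : ℝ) (a : X) :
    (⇑T)^[n] (r • a) = r • (⇑T)^[n] a :=
  (show Function.Commute ⇑T (r • ·) from fun x => map_smul T r x).iterate_left n a

open scoped Pointwise in
lemma UnitBallMixing.eventually_image_ball_inter {T : X →L[ℝ] X} (hT : UnitBallMixing T)
    {r : ℝ} (hr : 0 < r) {U : Set X} (hU : IsOpen U) (hUne : U.Nonempty) :
    ∀ᶠ n in atTop, ((⇑T)^[n] '' Metric.ball 0 r ∩ U).Nonempty := by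
  have hr₀ : r ≠ 0 := hr.ne'
  have h := hT (r⁻¹ • U) (hU.smul₀ (inv_ne_zero hr₀)) hUne.smul_set
  rw [← Nat.cofinite_eq_atTop]
  filter_upwards [eventually_cofinite.mpr h] with n ⟨_, ⟨a, ha, rfl⟩, haU⟩
  refine ⟨r • (⇑T)^[n] a, ⟨r • a, ?_, T.iterate_map_smul n r a⟩,
    (Set.mem_inv_smul_set_iff₀ hr₀ U _).mp haU⟩
  rw [mem_ball_zero_iff, norm_smul, Real.norm_of_nonneg hr.le]
  exact mul_lt_of_lt_one_right hr (mem_ball_zero_iff.mp ha)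

end UnitBallMixing

/-- `E` is a normed space of `X`-valued sequences, read through its coordinates `coord k`,
containing the unit vectors `single k a`, in which finitely supported sequences are dense. -/
structure SequenceSpace (X E : Type*) [NormedAddCommGroup X] [NormedSpace ℝ X]
    [NormedAddCommGroup E] [NormedSpace ℝ E] where
  coord : ℕ → E →L[ℝ] X
  single : ℕ → X →L[ℝ] E
  norm_coord_le : ∀ k x, ‖coord k x‖ ≤ ‖x‖
  norm_single_le : ∀ k a, ‖single k a‖ ≤ ‖a‖
  coord_single : ∀ j k a, coord j (single k a) = (Pi.single k a : ℕ → X) j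
  ext : ∀ x y, (∀ k, coord k x = coord k y) → x = y
  exists_norm_sub_sum_lt : ∀ u, ∀ ε > 0, ∃ s : Finset ℕ, ‖u - ∑ k ∈ s, single k (coord k u)‖ < ε

namespace SequenceSpace

variable {X E : Type*} [NormedAddCommGroup X] [NormedSpace ℝ X]
  [NormedAddCommGroup E] [NormedSpace ℝ E] (S : SequenceSpace X E)

/-- `B` is the paper's `B_T`. -/
def IsBackwardShift (T : X →L[ℝ] X) (B : E → E) : Prop :=
  ∀ x k, S.coord k (B x) = T (S.coord (k + 1) x)

lemma coord_sum_single {f : ℕ → ℕ} (hf : f.Injective) (s : Finset ℕ) (b : ℕ → X) (j : ℕ) :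
    S.coord (f j) (∑ k ∈ s, S.single (f k) (b k)) = if j ∈ s then b j else 0 := by
  simp only [map_sum, S.coord_single, Pi.single_apply, hf.eq_iff, Finset.sum_ite_eq]

lemma norm_sum_single_le (f : ℕ → ℕ) (s : Finset ℕ) (b : ℕ → X) {δ : ℝ}
    (hb : ∀ k ∈ s, ‖b k‖ ≤ δ) : ‖∑ k ∈ s, S.single (f k) (b k)‖ ≤ s.card * δ := by
  calc ‖∑ k ∈ s, S.single (f k) (b k)‖ ≤ ∑ _k ∈ s, δ :=
        norm_sum_le_of_le s fun k hk => (S.norm_single_le _ _).trans (hb k hk)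
    _ = s.card * δ := by rw [Finset.sum_const, nsmul_eq_mul]

variable {S} {T : X →L[ℝ] X} {B : E → E}

lemma IsBackwardShift.coord_iterate (hB : S.IsBackwardShift T B) (n : ℕ) (x : E) (k : ℕ) :
    S.coord k (B^[n] x) = (⇑T)^[n] (S.coord (k + n) x) := by
  induction n generalizing x with
  | zero => rfl
  | succ n ih =>
    rw [Function.iterate_succ_apply, ih, hB, ← Function.iterate_succ_apply, Nat.add_assoc]

lemma IsBackwardShift.iterate_add_sum_single (hB : S.IsBackwardShift T B) {n : ℕ}
    {s : Finset ℕ} (hs : ∀ j ∈ s, j < n) (t : Finset ℕ) (b a : ℕ → X) :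
    B^[n] (∑ k ∈ s, S.single k (b k) + ∑ k ∈ t, S.single (n + k) (a k)) =
      ∑ k ∈ t, S.single k ((⇑T)^[n] (a k)) := by
  refine S.ext _ _ fun j => ?_
  have hjs : n + j ∉ s := fun h => (hs _ h).not_ge (Nat.le_add_right n j)
  rw [hB.coord_iterate, map_add, Nat.add_comm j n, S.coord_sum_single (add_right_injective n),
    S.coord_sum_single (f := fun k => k) Function.injective_id,
    S.coord_sum_single (f := fun k => k) Function.injective_id, if_neg hjs, zero_add]
  split_ifs
  · rfl
  · exact Function.iterate_fixed (map_zero T) n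

lemma IsBackwardShift.unitBallMixing (hB : S.IsBackwardShift T B)
    (hmix : TopologicallyMixing B) : UnitBallMixing T := by
  intro U hU ⟨u, hu⟩
  obtain ⟨N, hN⟩ := hmix _ (S.coord 0 ⁻¹' U) Metric.isOpen_ball
    (hU.preimage (S.coord 0).continuous) ⟨0, Metric.mem_ball_self one_pos⟩
    ⟨S.single 0 u, by simpa [S.coord_single] using hu⟩
  refine (Set.finite_Iio N).subset fun n hn => Set.mem_Iio.mpr (lt_of_not_ge fun hNn => hn ?_)
  obtain ⟨_, ⟨x, hx, rfl⟩, hxU⟩ := hN n hNn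
  refine ⟨_, ⟨S.coord n x, ?_, rfl⟩, ?_⟩
  · exact mem_ball_zero_iff.mpr ((S.norm_coord_le n x).trans_lt (mem_ball_zero_iff.mp hx))
  · simpa [hB.coord_iterate] using hxU

lemma IsBackwardShift.topologicallyMixing (hB : S.IsBackwardShift T B) (hT : UnitBallMixing T) :
    TopologicallyMixing B := by
  refine topologicallyMixing_of_forall_dist fun u v ε hε => ?_
  obtain ⟨s, hs⟩ := S.exists_norm_sub_sum_lt u (ε / 2) (half_pos hε)
  obtain ⟨t, ht⟩ := S.exists_norm_sub_sum_lt v (ε / 2) (half_pos hε)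
  set δ : ℝ := ε / (2 * (t.card + 1))
  have hδ : 0 < δ := by positivity
  have hcard : t.card * δ < ε / 2 := by
    rw [mul_div_assoc', div_lt_div_iff₀ (by positivity) two_pos]
    nlinarith
  have h_beyond : ∀ᶠ n in atTop, ∀ j ∈ s, j < n :=
    (eventually_all_finset s).mpr fun j _ => eventually_gt_atTop j
  have h_hit : ∀ᶠ n in atTop, ∀ k ∈ t,
      ((⇑T)^[n] '' Metric.ball 0 δ ∩ Metric.ball (S.coord k v) δ).Nonempty :=
    (eventually_all_finset t).mpr fun k _ =>
      hT.eventually_image_ball_inter hδ Metric.isOpen_ball ⟨_, Metric.mem_ball_self hδ⟩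
  filter_upwards [h_beyond, h_hit] with n hn hhit
  choose! a ha using fun k hk => Set.image_inter_nonempty_iff.mp (hhit k hk)
  have ha_small : ‖∑ k ∈ t, S.single (n + k) (a k)‖ ≤ t.card * δ :=
    S.norm_sum_single_le _ t a fun k hk => (mem_ball_zero_iff.mp (ha k hk).1).le
  have ha_close : ‖∑ k ∈ t, S.single k ((⇑T)^[n] (a k) - S.coord k v)‖ ≤ t.card * δ :=
    S.norm_sum_single_le (fun k => k) t _ fun k hk => (mem_ball_iff_norm.mp (ha k hk).2).le
  refine ⟨∑ k ∈ s, S.single k (S.coord k u) + ∑ k ∈ t, S.single (n + k) (a k), ?_, ?_⟩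
  · calc _ = ‖(∑ k ∈ s, S.single k (S.coord k u) - u) + ∑ k ∈ t, S.single (n + k) (a k)‖ := by
          rw [dist_eq_norm, add_sub_right_comm]
      _ < ε / 2 + ε / 2 :=
          (norm_add_le _ _).trans_lt (add_lt_add_of_lt_of_le (by rwa [norm_sub_rev])
            (ha_small.trans hcard.le))
      _ = ε := add_halves ε
  · rw [hB.iterate_add_sum_single hn]
    calc _ = ‖∑ k ∈ t, S.single k ((⇑T)^[n] (a k) - S.coord k v)
            + (∑ k ∈ t, S.single k (S.coord k v) - v)‖ := by
          rw [dist_eq_norm]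
          simp only [map_sub, Finset.sum_sub_distrib]
          abel_nf
      _ < ε / 2 + ε / 2 :=
          (norm_add_le _ _).trans_lt (add_lt_add_of_le_of_lt (ha_close.trans hcard.le)
            (by rwa [norm_sub_rev]))
      _ = ε := add_halves ε

lemma IsBackwardShift.topologicallyMixing_iff (hB : S.IsBackwardShift T B) :
    TopologicallyMixing B ↔ UnitBallMixing T :=
  ⟨hB.unitBallMixing, hB.topologicallyMixing⟩

end SequenceSpace

section Instances

variable {X : Type*} [NormedAddCommGroup X] [NormedSpace ℝ X]

noncomputable def lpSequenceSpace (p : ℝ≥0∞) [Fact (1 ≤ p)] (hp : p ≠ ∞) :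
    SequenceSpace X (lp (fun _ : ℕ => X) p) where
  coord := lp.evalCLM ℝ _ p
  single := lp.singleContinuousLinearMap ℝ _ p
  norm_coord_le k x := lp.norm_apply_le_norm (zero_lt_one.trans_le Fact.out).ne' x k
  norm_single_le k a :=
    (lp.norm_single (E := fun _ : ℕ => X) (zero_lt_one.trans_le (Fact.out : 1 ≤ p)) k a).le
  coord_single _ _ _ := rfl
  ext _ _ h := lp.ext (funext h)
  exists_norm_sub_sum_lt u ε hε := by
    obtain ⟨s, hs⟩ := (Metric.tendsto_nhds.mp (lp.hasSum_single hp u) ε hε).exists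
    exact ⟨s, by rwa [dist_comm, dist_eq_norm] at hs⟩

lemma single_mem_c0Sum (k : ℕ) (a : X) :
    lp.single ∞ k a ∈ c0Sum (fun _ : ℕ => X) := by
  refine tendsto_const_nhds.congr' ?_
  filter_upwards [(Set.finite_singleton k).eventually_cofinite_notMem] with j hj
  rw [Set.mem_singleton_iff] at hj
  simp [hj]

/-- On `c₀` the tail beyond the finite set where `‖u k‖ ≥ ε / 2` has sup-norm at most `ε / 2`. -/
lemma c0Sum_exists_norm_sub_sum_lt (u : c0Sum (fun _ : ℕ => X)) {ε : ℝ} (hε : 0 < ε) :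
    ∃ s : Finset ℕ, ‖(u : lp (fun _ : ℕ => X) ∞) - ∑ k ∈ s, lp.single ∞ k (u.1 k)‖ < ε := by
  have hfin : {k | ¬ ‖u.1 k‖ < ε / 2}.Finite :=
    eventually_cofinite.mp (u.2.eventually (eventually_lt_nhds (half_pos hε)))
  refine ⟨hfin.toFinset, (lp.norm_le_of_forall_le (half_pos hε).le fun j => ?_).trans_lt
    (half_lt_self hε)⟩
  rw [lp.coeFn_sub, lp.coeFn_sum, Pi.sub_apply, Finset.sum_apply]
  simp only [lp.single_apply, Finset.sum_pi_single]
  split_ifs with hj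
  · simpa using (half_pos hε).le
  · simp only [Set.Finite.mem_toFinset, Set.mem_ofPred_eq, not_not] at hj
    simpa using hj.le

noncomputable def c0SequenceSpace : SequenceSpace X (c0Sum (fun _ : ℕ => X)) where
  coord k := (lp.evalCLM ℝ _ ∞ k).comp (c0Sum (fun _ : ℕ => X)).subtypeL
  single k := (lp.singleContinuousLinearMap ℝ (fun _ : ℕ => X) ∞ k).codRestrict
    (c0Sum (fun _ : ℕ => X)) (single_mem_c0Sum k)
  norm_coord_le k x := lp.norm_apply_le_norm ENNReal.top_ne_zero x.1 k
  norm_single_le k a := (lp.norm_single (E := fun _ : ℕ => X) ENNReal.zero_lt_top k a).le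
  coord_single _ _ _ := rfl
  ext _ _ h := Subtype.ext (lp.ext (funext h))
  exists_norm_sub_sum_lt u _ hε := by
    obtain ⟨s, hs⟩ := c0Sum_exists_norm_sub_sum_lt u hε
    refine ⟨s, lt_of_eq_of_lt ?_ hs⟩
    rw [Submodule.coe_norm, Submodule.coe_sub, Submodule.coe_sum]
    rfl

end Instances

theorem stmt_8_general {X : Type*} [NormedAddCommGroup X] [NormedSpace ℝ X]
    (T : X →L[ℝ] X) (p : ℝ≥0∞) [Fact (1 ≤ p)] (hp : p ≠ ∞) :
    (∀ B : lp (fun _ : ℕ => X) p →L[ℝ] lp (fun _ : ℕ => X) p,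
      (∀ (x : lp (fun _ : ℕ => X) p) (k : ℕ),
        (B x : ℕ → X) k = T ((x : ℕ → X) (k + 1))) →
      ((TopologicallyMixing ⇑B ↔
          ∀ U : Set X, IsOpen U → U.Nonempty →
            {n : ℕ | ¬ ((⇑T)^[n] '' Metric.ball (0 : X) 1 ∩ U).Nonempty}.Finite)
        ∧ (TopologicallyMixing ⇑T → TopologicallyMixing ⇑B)))
    ∧ (∀ B : c0Sum (fun _ : ℕ => X) →L[ℝ] c0Sum (fun _ : ℕ => X),
      (∀ (x : c0Sum (fun _ : ℕ => X)) (k : ℕ),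
        ((B x : lp (fun _ : ℕ => X) ∞) : ℕ → X) k
          = T (((x : lp (fun _ : ℕ => X) ∞) : ℕ → X) (k + 1))) →
      ((TopologicallyMixing ⇑B ↔
          ∀ U : Set X, IsOpen U → U.Nonempty →
            {n : ℕ | ¬ ((⇑T)^[n] '' Metric.ball (0 : X) 1 ∩ U).Nonempty}.Finite)
        ∧ (TopologicallyMixing ⇑T → TopologicallyMixing ⇑B))) := by
  have key : ∀ {E : Type _} [NormedAddCommGroup E] [NormedSpace ℝ E] (S : SequenceSpace X E)
      {B : E → E}, S.IsBackwardShift T B →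
        (TopologicallyMixing B ↔ UnitBallMixing T) ∧
          (TopologicallyMixing ⇑T → TopologicallyMixing B) :=
    fun _ _ hB => ⟨hB.topologicallyMixing_iff, fun hT => hB.topologicallyMixing hT.unitBallMixing⟩
  exact ⟨fun B hB => key (lpSequenceSpace p hp) hB, fun B hB => key c0SequenceSpace hB⟩

/-- the unilateral shift `B_T` on `ℓ^p(X,ℕ)` (or `c₀(X,ℕ)`) is mixing iff for
every non-empty open `U ⊆ X` the set `N_T(B_X(0,1),U)` is cofinite; in particular if `T` is
mixing then so is `B_T`. -/
theorem stmt_8 {X : Type*} [NormedAddCommGroup X] [NormedSpace ℝ X] [CompleteSpace X]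
    (T : X →L[ℝ] X) (p : ℝ≥0∞) [Fact (1 ≤ p)] (hp : p ≠ ∞) :
    (∀ B : lp (fun _ : ℕ => X) p →L[ℝ] lp (fun _ : ℕ => X) p,
      (∀ (x : lp (fun _ : ℕ => X) p) (k : ℕ),
        (B x : ℕ → X) k = T ((x : ℕ → X) (k + 1))) →
      ((TopologicallyMixing ⇑B ↔
          ∀ U : Set X, IsOpen U → U.Nonempty →
            {n : ℕ | ¬ ((⇑T)^[n] '' Metric.ball (0 : X) 1 ∩ U).Nonempty}.Finite)
        ∧ (TopologicallyMixing ⇑T → TopologicallyMixing ⇑B)))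
    ∧ (∀ B : c0Sum (fun _ : ℕ => X) →L[ℝ] c0Sum (fun _ : ℕ => X),
      (∀ (x : c0Sum (fun _ : ℕ => X)) (k : ℕ),
        ((B x : lp (fun _ : ℕ => X) ∞) : ℕ → X) k
          = T (((x : lp (fun _ : ℕ => X) ∞) : ℕ → X) (k + 1))) →
      ((TopologicallyMixing ⇑B ↔
          ∀ U : Set X, IsOpen U → U.Nonempty →
            {n : ℕ | ¬ ((⇑T)^[n] '' Metric.ball (0 : X) 1 ∩ U).Nonempty}.Finite)
        ∧ (TopologicallyMixing ⇑T → TopologicallyMixing ⇑B))) :=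
  stmt_8_general T p hp
end

section
/- If the shift $B_{(T_k)}$ is chaotic on $\ell^p((X_k)_k,J)$ with $1\le p<\infty$ (or on $c_0((X_k)_k,J)$), where $J=\mathbb{N}$ or $\mathbb{Z}$, then $B_{(T_k)}$ is mixing. -/
open Filter Topology ENNReal

/-!
Only the density of periodic points is needed. Let `z` be a periodic point of `B` of period `d`.
As `B` moves coordinate `σ i` to coordinate `i`, the vector `Bⁿ (e_j z_j)` lives on the `n`-th
`σ`-predecessor `i` of `j` (it vanishes if there is none), where it equals `(B^(n mod d) z)_i`; its
norm is at most `max 1 ‖B‖ ^ d` times a coordinate of `z` whose index leaves every finite set, so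
`Bⁿ (e_j z_j) → 0`. Dually, `e_k z_k = Bⁿ (e_{σⁿ k} (B^m z)_{σⁿ k})` with `m ≤ d` and `d ∣ n + m`,
and these preimages tend to `0` for the same reason. Finite sums of the `e_j z_j` approximate the
periodic points, so Kitai's criterion applies.
-/

open Function

section Kitai

variable {X F : Type*} [AddCommMonoid X] [TopologicalSpace X] [ContinuousAdd X]
  [FunLike F X X] [AddMonoidHomClass F X X]

def kitaiSubmonoid (f : F) : AddSubmonoid X where
  carrier := {x | Tendsto (fun n => f^[n] x) atTop (𝓝 0) ∧
    ∃ s : ℕ → X, (∀ n, f^[n] (s n) = x) ∧ Tendsto s atTop (𝓝 0)}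
  add_mem' := by
    rintro x y ⟨hx, s, hs, hs0⟩ ⟨hy, t, ht, ht0⟩
    refine ⟨?_, fun n => s n + t n, fun n => ?_, by simpa only [add_zero] using hs0.add ht0⟩
    · simpa only [iterate_map_add, add_zero] using hx.add hy
    · simp only [iterate_map_add, hs, ht]
  zero_mem' := ⟨by simp only [iterate_map_zero, tendsto_const_nhds],
    0, fun n => iterate_map_zero f n, tendsto_const_nhds⟩

theorem topologicallyMixing_of_dense_kitaiSubmonoid (f : F)
    (hD : Dense (kitaiSubmonoid f : Set X)) : TopologicallyMixing f := by
  intro U V hU hV hU₀ hV₀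
  obtain ⟨u, ⟨hu, -⟩, huU⟩ := hD.exists_mem_open hU hU₀
  obtain ⟨v, ⟨-, s, hs, hs0⟩, hvV⟩ := hD.exists_mem_open hV hV₀
  have hmemU : ∀ᶠ n in atTop, u + s n ∈ U := by
    refine (tendsto_const_nhds.add hs0) (?_ : U ∈ 𝓝 (u + 0))
    simpa only [add_zero] using hU.mem_nhds huU
  have hmemV : ∀ᶠ n in atTop, f^[n] (u + s n) ∈ V := by
    simp only [iterate_map_add, hs]
    refine (hu.add tendsto_const_nhds) (?_ : V ∈ 𝓝 (0 + v))
    simpa only [zero_add] using hV.mem_nhds hvV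
  obtain ⟨N, hN⟩ := eventually_atTop.mp (hmemU.and hmemV)
  exact ⟨N, fun n hn => ⟨_, ⟨u + s n, (hN n hn).1, rfl⟩, (hN n hn).2⟩⟩

end Kitai

structure CoordinateDecomposition (X : Type*) [NormedAddCommGroup X] {ι : Type*}
    (E : ι → Type*) [∀ i, NormedAddCommGroup (E i)] where
  coord : ∀ i, X →+ E i
  single : ∀ i, E i → X
  norm_coord_le (i : ι) (x : X) : ‖coord i x‖ ≤ ‖x‖
  norm_single_le (i : ι) (y : E i) : ‖single i y‖ ≤ ‖y‖
  coord_single_self (i : ι) (y : E i) : coord i (single i y) = y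
  coord_single_of_ne {i j : ι} (y : E j) (h : i ≠ j) : coord i (single j y) = 0
  hasSum_single (x : X) : HasSum (fun i => single i (coord i x)) x

namespace CoordinateDecomposition

variable {X : Type*} [NormedAddCommGroup X] {ι : Type*} {E : ι → Type*}
  [∀ i, NormedAddCommGroup (E i)] (𝒟 : CoordinateDecomposition X E)

theorem ext {x y : X} (h : ∀ i, 𝒟.coord i x = 𝒟.coord i y) : x = y :=
  (𝒟.hasSum_single x).unique (by simpa only [h] using 𝒟.hasSum_single y)

theorem tendsto_norm_coord_cofinite (x : X) :
    Tendsto (fun i => ‖𝒟.coord i x‖) cofinite (𝓝 0) := by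
  refine squeeze_zero (fun _ => norm_nonneg _) (fun i => ?_)
    (tendsto_norm_zero.comp (𝒟.hasSum_single x).summable.tendsto_cofinite_zero)
  simpa only [𝒟.coord_single_self, comp_apply] using 𝒟.norm_coord_le i (𝒟.single i (𝒟.coord i x))

theorem tendsto_norm_coord_comp_div {g : ℕ → ι} (hg : Injective g) {d : ℕ} (hd : 0 < d)
    (x : X) : Tendsto (fun n => ‖𝒟.coord (g (n / d)) x‖) atTop (𝓝 0) :=
  (𝒟.tendsto_norm_coord_cofinite x).comp
    (hg.tendsto_cofinite.comp (Nat.cofinite_eq_atTop ▸ Nat.tendsto_div_const_atTop hd.ne'))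

variable [NormedSpace ℝ X] {σ : ι → ι} {T : ∀ i, E (σ i) → E i} {B : X →L[ℝ] X}

theorem coord_iterate_eq_of_coord_eq (hB : ∀ x i, 𝒟.coord i (B x) = T i (𝒟.coord (σ i) x))
    {x y : X} : ∀ {n : ℕ} {i : ι}, 𝒟.coord (σ^[n] i) x = 𝒟.coord (σ^[n] i) y →
      𝒟.coord i (B^[n] x) = 𝒟.coord i (B^[n] y)
  | 0, _, h => h
  | n + 1, i, h => by
    rw [iterate_succ_apply', iterate_succ_apply', hB, hB,
      coord_iterate_eq_of_coord_eq hB (n := n) (i := σ i) h]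

theorem norm_coord_apply_le (hB : ∀ x i, 𝒟.coord i (B x) = T i (𝒟.coord (σ i) x))
    (i : ι) (x : X) : ‖𝒟.coord i (B x)‖ ≤ ‖B‖ * ‖𝒟.coord (σ i) x‖ :=
  calc ‖𝒟.coord i (B x)‖ = ‖𝒟.coord i (B (𝒟.single (σ i) (𝒟.coord (σ i) x)))‖ := by
        rw [hB, hB, 𝒟.coord_single_self]
    _ ≤ ‖B (𝒟.single (σ i) (𝒟.coord (σ i) x))‖ := 𝒟.norm_coord_le _ _
    _ ≤ ‖B‖ * ‖𝒟.single (σ i) (𝒟.coord (σ i) x)‖ := B.le_opNorm _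
    _ ≤ ‖B‖ * ‖𝒟.coord (σ i) x‖ := by gcongr; exact 𝒟.norm_single_le _ _

theorem norm_coord_iterate_le (hB : ∀ x i, 𝒟.coord i (B x) = T i (𝒟.coord (σ i) x))
    (x : X) : ∀ (n : ℕ) (i : ι), ‖𝒟.coord i (B^[n] x)‖ ≤ ‖B‖ ^ n * ‖𝒟.coord (σ^[n] i) x‖
  | 0, i => by rw [pow_zero, one_mul]; rfl
  | n + 1, i =>
    calc ‖𝒟.coord i (B^[n + 1] x)‖ ≤ ‖B‖ * ‖𝒟.coord (σ i) (B^[n] x)‖ := by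
          rw [iterate_succ_apply']; exact 𝒟.norm_coord_apply_le hB i _
      _ ≤ ‖B‖ * (‖B‖ ^ n * ‖𝒟.coord (σ^[n] (σ i)) x‖) := by
          gcongr; exact norm_coord_iterate_le hB x n (σ i)
      _ = ‖B‖ ^ (n + 1) * ‖𝒟.coord (σ^[n + 1] i) x‖ := by
          rw [iterate_succ_apply, pow_succ']; ring

theorem norm_coord_iterate_le_of_le (hB : ∀ x i, 𝒟.coord i (B x) = T i (𝒟.coord (σ i) x))
    {n d : ℕ} (hnd : n ≤ d) (i : ι) (x : X) :
    ‖𝒟.coord i (B^[n] x)‖ ≤ max 1 ‖B‖ ^ d * ‖𝒟.coord (σ^[n] i) x‖ := by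
  refine (𝒟.norm_coord_iterate_le hB x n i).trans ?_
  gcongr
  exact (pow_le_pow_left₀ (norm_nonneg _) (le_max_right _ _) n).trans
    (pow_le_pow_right₀ (le_max_left _ _) hnd)

theorem coord_iterate_single_of_ne (hB : ∀ x i, 𝒟.coord i (B x) = T i (𝒟.coord (σ i) x))
    {n : ℕ} {i j : ι} (h : σ^[n] i ≠ j) (y : E j) : 𝒟.coord i (B^[n] (𝒟.single j y)) = 0 := by
  rw [𝒟.coord_iterate_eq_of_coord_eq hB (y := 0) (by rw [𝒟.coord_single_of_ne y h, map_zero]),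
    iterate_map_zero, map_zero]

theorem iterate_single_eq_zero (hB : ∀ x i, 𝒟.coord i (B x) = T i (𝒟.coord (σ i) x))
    {n : ℕ} {j : ι} (h : ∀ i, σ^[n] i ≠ j) (y : E j) : B^[n] (𝒟.single j y) = 0 :=
  𝒟.ext fun i => by rw [𝒟.coord_iterate_single_of_ne hB (h i), map_zero]

theorem iterate_single_coord (hσ : Injective σ)
    (hB : ∀ x i, 𝒟.coord i (B x) = T i (𝒟.coord (σ i) x)) {n : ℕ} {i j : ι}
    (hij : σ^[n] i = j) (x : X) :
    B^[n] (𝒟.single j (𝒟.coord j x)) = 𝒟.single i (𝒟.coord i (B^[n] x)) := by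
  refine 𝒟.ext fun k => ?_
  by_cases hk : k = i
  · subst hk
    rw [𝒟.coord_single_self]
    exact 𝒟.coord_iterate_eq_of_coord_eq hB (by rw [hij, 𝒟.coord_single_self])
  · rw [𝒟.coord_single_of_ne _ hk, 𝒟.coord_iterate_single_of_ne hB]
    exact fun h => hk (hσ.iterate n (h.trans hij.symm))

theorem tendsto_iterate_single_coord (hσ : Injective σ)
    (horb : ∀ k, Injective fun n : ℕ => σ^[n] k)
    (hB : ∀ x i, 𝒟.coord i (B x) = T i (𝒟.coord (σ i) x)) {d : ℕ} {z : X}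
    (hz : IsPeriodicPt B d z) (hd : 0 < d) (j : ι) :
    Tendsto (fun n => B^[n] (𝒟.single j (𝒟.coord j z))) atTop (𝓝 0) := by
  by_cases hpred : ∀ n, ∃ i, σ^[n] i = j
  · choose pred hpred using hpred
    have hinj : Injective fun m => pred (d * m) := fun a b hab => by
      have : σ^[d * a] (pred (d * a)) = σ^[d * b] (pred (d * a)) := by
        rw [hpred, show pred (d * a) = pred (d * b) from hab, hpred]
      exact Nat.eq_of_mul_eq_mul_left hd (horb _ this)
    have hbound := (𝒟.tendsto_norm_coord_comp_div hinj hd z).const_mul (max 1 ‖B‖ ^ d)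
    rw [mul_zero] at hbound
    refine squeeze_zero_norm (fun n => ?_) hbound
    have hidx : σ^[n % d] (pred n) = pred (d * (n / d)) :=
      hσ.iterate (d * (n / d)) (by rw [← iterate_add_apply, Nat.div_add_mod, hpred, hpred])
    calc ‖B^[n] (𝒟.single j (𝒟.coord j z))‖
        = ‖𝒟.single (pred n) (𝒟.coord (pred n) (B^[n % d] z))‖ := by
          rw [𝒟.iterate_single_coord hσ hB (hpred n), hz.iterate_mod_apply]
      _ ≤ ‖𝒟.coord (pred n) (B^[n % d] z)‖ := 𝒟.norm_single_le _ _
      _ ≤ max 1 ‖B‖ ^ d * ‖𝒟.coord (pred (d * (n / d))) z‖ := by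
          rw [← hidx]; exact 𝒟.norm_coord_iterate_le_of_le hB (Nat.mod_lt n hd).le _ _
  · obtain ⟨n₀, hn₀⟩ := not_forall.mp hpred
    refine tendsto_const_nhds.congr' ((eventually_ge_atTop n₀).mono fun n hn => ?_)
    refine (𝒟.iterate_single_eq_zero hB (fun i hi => hn₀ ⟨σ^[n - n₀] i, ?_⟩) _).symm
    rwa [← iterate_add_apply, Nat.add_sub_cancel' hn]

theorem exists_tendsto_iterate_preimage_single_coord (hσ : Injective σ)
    (horb : ∀ k, Injective fun n : ℕ => σ^[n] k)
    (hB : ∀ x i, 𝒟.coord i (B x) = T i (𝒟.coord (σ i) x)) {d : ℕ} {z : X}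
    (hz : IsPeriodicPt B d z) (hd : 0 < d) (k : ι) :
    ∃ s : ℕ → X, (∀ n, B^[n] (s n) = 𝒟.single k (𝒟.coord k z)) ∧
      Tendsto s atTop (𝓝 0) := by
  have hround : ∀ n, d - n % d + n = d * (n / d + 1) := fun n => by
    have := Nat.div_add_mod n d
    have := Nat.mod_lt n hd
    rw [mul_add_one]
    omega
  refine ⟨fun n => 𝒟.single (σ^[n] k) (𝒟.coord (σ^[n] k) (B^[d - n % d] z)), fun n => ?_, ?_⟩
  · rw [𝒟.iterate_single_coord hσ hB rfl, ← iterate_add_apply, add_comm, hround,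
      (hz.mul_const _).eq]
  have hinj : Injective fun m => σ^[d * (m + 1)] k := fun a b hab => by
    simpa [hd.ne'] using horb k hab
  have hbound := (𝒟.tendsto_norm_coord_comp_div hinj hd z).const_mul (max 1 ‖B‖ ^ d)
  rw [mul_zero] at hbound
  refine squeeze_zero_norm (fun n => ?_) hbound
  calc ‖𝒟.single (σ^[n] k) (𝒟.coord (σ^[n] k) (B^[d - n % d] z))‖
      ≤ ‖𝒟.coord (σ^[n] k) (B^[d - n % d] z)‖ := 𝒟.norm_single_le _ _
    _ ≤ max 1 ‖B‖ ^ d * ‖𝒟.coord (σ^[d - n % d] (σ^[n] k)) z‖ :=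
        𝒟.norm_coord_iterate_le_of_le hB (Nat.sub_le _ _) _ _
    _ = max 1 ‖B‖ ^ d * ‖𝒟.coord (σ^[d * (n / d + 1)] k) z‖ := by
        rw [← iterate_add_apply, hround]

theorem topologicallyMixing_of_dense_periodicPts (hσ : Injective σ)
    (horb : ∀ k, Injective fun n : ℕ => σ^[n] k)
    (hB : ∀ x i, 𝒟.coord i (B x) = T i (𝒟.coord (σ i) x)) (hper : Dense (periodicPts B)) :
    TopologicallyMixing B := by
  refine topologicallyMixing_of_dense_kitaiSubmonoid B (Dense.of_closure (hper.mono ?_))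
  rintro z ⟨d, hd, hz⟩
  refine mem_closure_of_tendsto (𝒟.hasSum_single z) (Eventually.of_forall fun s =>
    AddSubmonoid.sum_mem _ fun j _ => ⟨?_, ?_⟩)
  · exact 𝒟.tendsto_iterate_single_coord hσ horb hB hz hd j
  · exact 𝒟.exists_tendsto_iterate_preimage_single_coord hσ horb hB hz hd j

end CoordinateDecomposition

section SequenceSpaces

variable {ι : Type*} [DecidableEq ι] {E : ι → Type*} [∀ i, NormedAddCommGroup (E i)]

noncomputable def lpDecomposition (p : ℝ≥0∞) [Fact (1 ≤ p)] (hp : p ≠ ∞) :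
    CoordinateDecomposition (lp E p) E where
  coord i := { toFun := fun x => x i, map_zero' := rfl, map_add' := fun _ _ => rfl }
  single i := lp.single p i
  norm_coord_le i x := lp.norm_apply_le_norm (zero_lt_one.trans_le Fact.out).ne' x i
  norm_single_le i y := (lp.norm_single (zero_lt_one.trans_le Fact.out) i y).le
  coord_single_self := lp.single_apply_self p
  coord_single_of_ne y h := lp.single_apply_ne p _ y h
  hasSum_single := lp.hasSum_single hp

theorem lp.hasSum_single_of_tendsto_cofinite {f : lp E ∞}
    (hf : Tendsto (fun i => ‖f i‖) cofinite (𝓝 0)) :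
    HasSum (fun i => lp.single ∞ i (f i)) f := by
  refine Metric.tendsto_nhds.mpr fun ε hε => ?_
  have hsmall : {i | ¬‖f i‖ < ε / 2}.Finite :=
    eventually_cofinite.mp (hf.eventually (gt_mem_nhds (half_pos hε)))
  filter_upwards [eventually_ge_atTop hsmall.toFinset] with s hs
  rw [dist_eq_norm]
  refine (lp.norm_le_of_forall_le (half_pos hε).le fun j => ?_).trans_lt (half_lt_self hε)
  simp only [lp.coeFn_sub, lp.coeFn_sum, lp.coeFn_single, Pi.sub_apply, Finset.sum_apply,
    Finset.sum_pi_single]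
  split_ifs with hj
  · simpa using (half_pos hε).le
  · simpa using (not_not.mp fun h => hj (hs (hsmall.mem_toFinset.mpr h))).le

variable [∀ i, NormedSpace ℝ (E i)]

theorem single_mem_c0Sum_s11 (i : ι) (y : E i) : lp.single ∞ i y ∈ c0Sum E := by
  refine tendsto_const_nhds.congr' ((Set.finite_singleton i).eventually_cofinite_notMem.mono
    fun j hj => ?_)
  exact (norm_eq_zero.mpr (lp.single_apply_ne ∞ i y hj)).symm

noncomputable def c0SumDecomposition : CoordinateDecomposition (c0Sum E) E where
  coord i := { toFun := fun x => (x : lp E ∞) i, map_zero' := rfl, map_add' := fun _ _ => rfl }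
  single i y := ⟨lp.single ∞ i y, single_mem_c0Sum_s11 i y⟩
  norm_coord_le i x := lp.norm_apply_le_norm ENNReal.top_ne_zero (x : lp E ∞) i
  norm_single_le i y := (lp.norm_single ENNReal.zero_lt_top i y).le
  coord_single_self := lp.single_apply_self ∞
  coord_single_of_ne y h := lp.single_apply_ne ∞ _ y h
  hasSum_single x :=
    (Topology.IsInducing.subtypeVal.hasSum_iff (g := (c0Sum E).subtype) _ x).mp
      (lp.hasSum_single_of_tendsto_cofinite x.2)

end SequenceSpaces

theorem injective_iterate_add_one {M : Type*} [AddMonoidWithOne M] [CharZero M]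
    [IsLeftCancelAdd M] (k : M) : Injective fun n : ℕ => (fun x => x + 1)^[n] k := by
  intro a b h
  simpa [add_right_iterate] using h

theorem stmt_11_general (EN : ℕ → Type*) [∀ k, NormedAddCommGroup (EN k)] [∀ k, NormedSpace ℝ (EN k)]
    (TN : ∀ k : ℕ, EN (k + 1) →L[ℝ] EN k)
    (EZ : ℤ → Type*) [∀ k, NormedAddCommGroup (EZ k)] [∀ k, NormedSpace ℝ (EZ k)]
    (TZ : ∀ k : ℤ, EZ (k + 1) →L[ℝ] EZ k)
    (p : ℝ≥0∞) [Fact (1 ≤ p)] (hp : p ≠ ∞) :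
    (∀ B : lp EN p →L[ℝ] lp EN p,
      (∀ (x : lp EN p) (k : ℕ), (B x : ∀ i, EN i) k = TN k ((x : ∀ i, EN i) (k + 1))) →
      Chaotic ⇑B → TopologicallyMixing ⇑B)
    ∧ (∀ B : c0Sum EN →L[ℝ] c0Sum EN,
      (∀ (x : c0Sum EN) (k : ℕ),
        ((B x : lp EN ∞) : ∀ i, EN i) k = TN k (((x : lp EN ∞) : ∀ i, EN i) (k + 1))) →
      Chaotic ⇑B → TopologicallyMixing ⇑B)
    ∧ (∀ B : lp EZ p →L[ℝ] lp EZ p,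
      (∀ (x : lp EZ p) (k : ℤ), (B x : ∀ i, EZ i) k = TZ k ((x : ∀ i, EZ i) (k + 1))) →
      Chaotic ⇑B → TopologicallyMixing ⇑B)
    ∧ (∀ B : c0Sum EZ →L[ℝ] c0Sum EZ,
      (∀ (x : c0Sum EZ) (k : ℤ),
        ((B x : lp EZ ∞) : ∀ i, EZ i) k = TZ k (((x : lp EZ ∞) : ∀ i, EZ i) (k + 1))) →
      Chaotic ⇑B → TopologicallyMixing ⇑B) :=
  ⟨fun _ hB hch => (lpDecomposition p hp).topologicallyMixing_of_dense_periodicPts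
      (add_left_injective 1) injective_iterate_add_one (T := fun k => TN k) hB hch.2,
    fun _ hB hch => c0SumDecomposition.topologicallyMixing_of_dense_periodicPts
      (add_left_injective 1) injective_iterate_add_one (T := fun k => TN k) hB hch.2,
    fun _ hB hch => (lpDecomposition p hp).topologicallyMixing_of_dense_periodicPts
      (add_left_injective 1) injective_iterate_add_one (T := fun k => TZ k) hB hch.2,
    fun _ hB hch => c0SumDecomposition.topologicallyMixing_of_dense_periodicPts
      (add_left_injective 1) injective_iterate_add_one (T := fun k => TZ k) hB hch.2⟩

/-- if the shift `B_{(T_k)}` is chaotic on `ℓ^p((X_k)_k,J)` or on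
`c₀((X_k)_k,J)` (`J = ℕ` or `ℤ`), then it is mixing. -/
theorem stmt_11 (EN : ℕ → Type*) [∀ k, NormedAddCommGroup (EN k)] [∀ k, NormedSpace ℝ (EN k)]
    [∀ k, CompleteSpace (EN k)] (TN : ∀ k : ℕ, EN (k + 1) →L[ℝ] EN k)
    (EZ : ℤ → Type*) [∀ k, NormedAddCommGroup (EZ k)] [∀ k, NormedSpace ℝ (EZ k)]
    [∀ k, CompleteSpace (EZ k)] (TZ : ∀ k : ℤ, EZ (k + 1) →L[ℝ] EZ k)
    (p : ℝ≥0∞) [Fact (1 ≤ p)] (hp : p ≠ ∞) :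
    (∀ B : lp EN p →L[ℝ] lp EN p,
      (∀ (x : lp EN p) (k : ℕ), (B x : ∀ i, EN i) k = TN k ((x : ∀ i, EN i) (k + 1))) →
      Chaotic ⇑B → TopologicallyMixing ⇑B)
    ∧ (∀ B : c0Sum EN →L[ℝ] c0Sum EN,
      (∀ (x : c0Sum EN) (k : ℕ),
        ((B x : lp EN ∞) : ∀ i, EN i) k = TN k (((x : lp EN ∞) : ∀ i, EN i) (k + 1))) →
      Chaotic ⇑B → TopologicallyMixing ⇑B)
    ∧ (∀ B : lp EZ p →L[ℝ] lp EZ p,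
      (∀ (x : lp EZ p) (k : ℤ), (B x : ∀ i, EZ i) k = TZ k ((x : ∀ i, EZ i) (k + 1))) →
      Chaotic ⇑B → TopologicallyMixing ⇑B)
    ∧ (∀ B : c0Sum EZ →L[ℝ] c0Sum EZ,
      (∀ (x : c0Sum EZ) (k : ℤ),
        ((B x : lp EZ ∞) : ∀ i, EZ i) k = TZ k (((x : lp EZ ∞) : ∀ i, EZ i) (k + 1))) →
      Chaotic ⇑B → TopologicallyMixing ⇑B) :=
  stmt_11_general EN TN EZ TZ p hp
end

section
/- Let $T$ be a bounded operator on a separable Banach space $X$. The bilateral shift $B_T$ is chaotic on $c_0(X,\mathbb{Z})$ if and only if $T$ satisfies the Kitai Criterion with $X_0=Y_0$: there exist a dense subset $X_0\subseteq X$ and a map $S:X_0\to X_0$ such that $T^nx\to0$ and $S^nx\to 0$ for each $x\in X_0$, and $TSx=x$ for each $x\in X_0$. -/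
open Filter Topology ENNReal

/-!
A periodic point `p` of `B_T`, of period `d`, yields the point `p 0`, with
`T^n (p 0) = (B^n p) (-n) → 0`, and the backward `T`-orbit `k ↦ (B^((d-1)k) p) k` of `p 0`, which
tends to `0`: the coordinates of the finitely many points of the `B`-orbit of `p` tend to `0`
together. A right inverse `S` of `T` on the points having a backward orbit to `0` is obtained by
well-ordering these backward orbits and sending `x` to the successor of the last visit to `x` of
the least backward orbit through `x`. Along an `S`-orbit the chosen backward orbit can only
decrease, so it is eventually constant, and from then on the `S`-orbit runs along it to `0`.

Conversely, given Kitai data `(X₀, S)`, the sums of vectors `single i a` with `a ∈ X₀` are dense.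
Each such vector `x` satisfies `B^n x → 0` and `B^n r_n = x` with
`r_n = single (i + n) (S^n a) → 0`, which gives transitivity and hence, by Baire's theorem, a
dense orbit. Such an `x` is also approximated by the `d`-periodic point carrying the two-sided
orbit `(…, T^d a, a, S^d a, …)` along `i + dℤ`. Both properties pass to sums.
-/

open Function Set

namespace c0Sum

variable {ι : Type*} {E : ι → Type*} [∀ i, NormedAddCommGroup (E i)] [∀ i, NormedSpace ℝ (E i)]

instance : CoeFun (c0Sum E) fun _ => ∀ i, E i := ⟨fun x => ((x : lp E ∞) : ∀ i, E i)⟩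

theorem tendsto_norm_apply (x : c0Sum E) : Tendsto (fun i => ‖x i‖) cofinite (𝓝 0) := x.2

@[ext] theorem ext {x y : c0Sum E} (h : ∀ i, x i = y i) : x = y := Subtype.ext (lp.ext (funext h))

@[simp] theorem sub_apply (x y : c0Sum E) (i : ι) : (x - y) i = x i - y i := rfl

theorem sum_apply {α : Type*} (s : Finset α) (x : α → c0Sum E) (i : ι) :
    (∑ a ∈ s, x a) i = ∑ a ∈ s, x a i := by
  rw [Submodule.coe_sum, lp.coeFn_sum, Finset.sum_apply]

theorem norm_apply_le (x : c0Sum E) (i : ι) : ‖x i‖ ≤ ‖x‖ :=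
  lp.norm_apply_le_norm ENNReal.top_ne_zero _ i

theorem norm_le_of_forall_le {x : c0Sum E} {C : ℝ} (hC : 0 ≤ C) (h : ∀ i, ‖x i‖ ≤ C) : ‖x‖ ≤ C :=
  lp.norm_le_of_forall_le hC h

def mk (f : ∀ i, E i) (hf : Tendsto (fun i => ‖f i‖) cofinite (𝓝 0)) : c0Sum E :=
  ⟨⟨f, memℓp_infty_iff.2 hf.bddAbove_range_of_cofinite⟩, hf⟩

@[simp] theorem mk_apply (f : ∀ i, E i) (hf) (i : ι) : mk f hf i = f i := rfl

variable [DecidableEq ι]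

def single (i : ι) (a : E i) : c0Sum E :=
  ⟨lp.single ∞ i a, tendsto_const_nhds.congr' <| (eventually_cofinite_ne i).mono fun j hj => by
    simp [Pi.single_eq_of_ne hj]⟩

@[simp] theorem single_apply (i : ι) (a : E i) (j : ι) : single i a j = Pi.single i a j := rfl

@[simp] theorem norm_single (i : ι) (a : E i) : ‖single i a‖ = ‖a‖ :=
  lp.norm_single ENNReal.top_ne_zero.bot_lt i a

theorem sum_single_apply (s : Finset ι) (a : ∀ i, E i) (j : ι) :
    (∑ i ∈ s, single i (a i)) j = if j ∈ s then a j else 0 := by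
  rw [sum_apply]
  simp only [single_apply]
  exact Finset.sum_pi_single _ _ _

omit [DecidableEq ι] in
theorem tendsto_norm_apply_iterate_of_isPeriodicPt {f : c0Sum E → c0Sum E} {d : ℕ} {p : c0Sum E}
    (hp : IsPeriodicPt f d p) (hd : 0 < d) (g : ℕ → ℕ) {n : ℕ → ι}
    (hn : Tendsto n atTop cofinite) :
    Tendsto (fun k => ‖(f^[g k] p) (n k)‖) atTop (𝓝 0) := by
  have hsum : Tendsto (fun k => ∑ j ∈ Finset.range d, ‖(f^[j] p) (n k)‖) atTop (𝓝 0) := by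
    simpa using tendsto_finsetSum (Finset.range d) fun j _ =>
      (tendsto_norm_apply (f^[j] p)).comp hn
  refine squeeze_zero (fun _ => norm_nonneg _) (fun k => ?_) hsum
  rw [← hp.iterate_mod_apply]
  exact Finset.single_le_sum (f := fun j => ‖(f^[j] p) (n k)‖) (fun _ _ => norm_nonneg _)
    (Finset.mem_range.2 (Nat.mod_lt _ hd))

omit [DecidableEq ι] in
theorem isClosed : IsClosed (c0Sum E : Set (lp E ∞)) := by
  refine isClosed_of_closure_subset fun x hx => ?_
  refine Metric.tendsto_nhds.2 fun ε hε => ?_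
  obtain ⟨y, hy, hxy⟩ := Metric.mem_closure_iff.1 hx (ε / 2) (half_pos hε)
  filter_upwards [Metric.tendsto_nhds.1 hy (ε / 2) (half_pos hε)] with i hi
  have hxyi : ‖x i - y i‖ ≤ dist x y := by
    rw [dist_eq_norm]; exact lp.norm_apply_le_norm ENNReal.top_ne_zero (x - y) i
  simp only [Real.dist_eq, sub_zero, abs_norm] at hi ⊢
  linarith [norm_le_norm_add_norm_sub' (x i) (y i)]

omit [DecidableEq ι] in
instance [∀ i, CompleteSpace (E i)] : CompleteSpace (c0Sum E) :=
  isClosed.completeSpace_coe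

theorem dense_addSubmonoidClosure_single {D : ∀ i, Set (E i)} (hD : ∀ i, Dense (D i)) :
    Dense (AddSubmonoid.closure (⋃ i, single i '' D i) : Set (c0Sum E)) := by
  refine Metric.dense_iff.2 fun z ε hε => ?_
  have hfin : {i | ¬ ‖z i‖ < ε / 2}.Finite :=
    (tendsto_norm_apply z).eventually (gt_mem_nhds (half_pos hε))
  choose a haD ha using fun i => (hD i).exists_dist_lt (z i) (half_pos hε)
  refine ⟨∑ i ∈ hfin.toFinset, single i (a i), ?_, AddSubmonoid.sum_mem _ fun i _ =>
    AddSubmonoid.subset_closure (mem_iUnion.2 ⟨i, a i, haD i, rfl⟩)⟩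
  rw [Metric.mem_ball, dist_eq_norm]
  refine (norm_le_of_forall_le (half_pos hε).le fun j => ?_).trans_lt (half_lt_self hε)
  rw [sub_apply, sum_single_apply]
  split_ifs with hj
  · rw [← dist_eq_norm, dist_comm]; exact (ha j).le
  · simpa using (by simpa using hj : ‖z j‖ < ε / 2).le

omit [DecidableEq ι] in
instance [Countable ι] [∀ i, TopologicalSpace.SeparableSpace (E i)] :
    TopologicalSpace.SeparableSpace (c0Sum E) := by
  classical
  choose D hDc hD using fun i => TopologicalSpace.exists_countable_dense (E i)
  have hsep : TopologicalSpace.IsSeparable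
      (Submodule.span ℝ (⋃ i, single i '' D i) : Set (c0Sum E)) :=
    (countable_iUnion fun i => (hDc i).image _).isSeparable.span
  refine TopologicalSpace.isSeparable_univ_iff.1 (hsep.closure.mono ?_)
  rw [← (dense_addSubmonoidClosure_single hD).closure_eq]
  exact closure_mono (AddSubmonoid.closure_le.2 Submodule.subset_span)

end c0Sum

theorem chaotic_iff {Y : Type*} [TopologicalSpace Y] {f : Y → Y} :
    Chaotic f ↔ Hypercyclic f ∧ Dense (periodicPts f) := Iff.rfl

theorem Hypercyclic.of_topologicallyTransitive {Y : Type*} [TopologicalSpace Y]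
    [SecondCountableTopology Y] [BaireSpace Y] [Nonempty Y] {f : Y → Y} (hf : Continuous f)
    (ht : TopologicallyTransitive f) : Hypercyclic f := by
  let 𝓑 := {U ∈ TopologicalSpace.countableBasis Y | U.Nonempty}
  have hopen : ∀ U ∈ 𝓑, IsOpen (⋃ n, f^[n] ⁻¹' U) := fun U hU =>
    isOpen_iUnion fun n => (TopologicalSpace.isOpen_of_mem_countableBasis hU.1).preimage
      (hf.iterate n)
  have hdense : ∀ U ∈ 𝓑, Dense (⋃ n, f^[n] ⁻¹' U) := fun U hU => by
    refine dense_iff_inter_open.2 fun V hV hVne => ?_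
    obtain ⟨n, _, ⟨w, hwV, rfl⟩, hwU⟩ :=
      ht V U hV (TopologicalSpace.isOpen_of_mem_countableBasis hU.1) hVne hU.2
    exact ⟨w, hwV, mem_iUnion.2 ⟨n, hwU⟩⟩
  obtain ⟨y, hy⟩ := (dense_biInter_of_isOpen hopen
    ((TopologicalSpace.countable_countableBasis Y).mono (sep_subset _ _)) hdense).nonempty
  refine ⟨y, (TopologicalSpace.isBasis_countableBasis Y).dense_iff.2 fun U hU hUne => ?_⟩
  obtain ⟨n, hn⟩ := mem_iUnion.1 (mem_iInter₂.1 hy U ⟨hU, hUne⟩)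
  exact ⟨_, hn, n, rfl⟩

section AdditiveDynamics

variable {Y F : Type*} [AddMonoid Y] [FunLike F Y Y] [AddMonoidHomClass F Y Y]

def periodicPtsAddSubmonoid (f : F) : AddSubmonoid Y where
  carrier := periodicPts f
  add_mem' := by
    rintro x y ⟨m, hm, hx⟩ ⟨n, hn, hy⟩
    refine ⟨m * n, Nat.mul_pos hm hn, ?_⟩
    simp only [IsPeriodicPt, IsFixedPt, iterate_map_add, (hx.mul_const n).eq,
      (hy.const_mul m).eq]
  zero_mem' := ⟨1, one_pos, map_zero f⟩

variable [TopologicalSpace Y] [ContinuousAdd Y]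

def kitaiVectors (f : F) : AddSubmonoid Y where
  carrier := {x | Tendsto (fun n => f^[n] x) atTop (𝓝 0) ∧
    ∃ r : ℕ → Y, Tendsto r atTop (𝓝 0) ∧ ∀ n, f^[n] (r n) = x}
  add_mem' := by
    rintro x y ⟨hx, r, hr, hrx⟩ ⟨hy, s, hs, hsy⟩
    refine ⟨?_, fun n => r n + s n, by simpa using hr.add hs, fun n => ?_⟩
    · simpa only [iterate_map_add, add_zero] using hx.add hy
    · simp only [iterate_map_add, hrx, hsy]
  zero_mem' := ⟨by simp only [iterate_map_zero, tendsto_const_nhds],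
    0, tendsto_const_nhds, fun n => iterate_map_zero f n⟩

theorem TopologicallyTransitive.of_dense_kitaiVectors {f : F}
    (h : Dense (kitaiVectors f : Set Y)) : TopologicallyTransitive f := by
  intro U V hU hV hUne hVne
  obtain ⟨x, ⟨hx, -⟩, hxU⟩ := h.exists_mem_open hU hUne
  obtain ⟨y, ⟨-, r, hr, hry⟩, hyV⟩ := h.exists_mem_open hV hVne
  have hU' : ∀ᶠ n in atTop, x + r n ∈ U :=
    (by simpa using tendsto_const_nhds.add hr : Tendsto (fun n => x + r n) atTop (𝓝 x))
      (hU.mem_nhds hxU)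
  have hV' : ∀ᶠ n in atTop, f^[n] x + y ∈ V :=
    (by simpa using hx.add_const y : Tendsto (fun n => f^[n] x + y) atTop (𝓝 y))
      (hV.mem_nhds hyV)
  obtain ⟨n, hnU, hnV⟩ := (hU'.and hV').exists
  exact ⟨n, f^[n] (x + r n), mem_image_of_mem _ hnU, by rwa [iterate_map_add, hry]⟩

end AdditiveDynamics

section BackwardOrbits

variable {X : Type*} [TopologicalSpace X]

def backwardOrbits (T : X → X) (z : X) : Set (ℕ → X) :=
  {u | (∀ n, T (u (n + 1)) = u n) ∧ Tendsto u atTop (𝓝 z)}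

def unstableSet (T : X → X) (z : X) : Set X := (fun u => u 0) '' backwardOrbits T z

def stableSet (T : X → X) (z : X) : Set X := {x | Tendsto (fun n => T^[n] x) atTop (𝓝 z)}

variable {T : X → X} {z : X}

theorem apply_mem_unstableSet {u : ℕ → X} (hu : u ∈ backwardOrbits T z) (k : ℕ) :
    u k ∈ unstableSet T z :=
  ⟨fun n => u (k + n), ⟨fun n => hu.1 (k + n),
    ((tendsto_add_atTop_iff_nat k).2 hu.2).congr fun n => by rw [add_comm]⟩, rfl⟩

theorem mem_unstableSet_self (hz : T z = z) : z ∈ unstableSet T z :=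
  ⟨fun _ => z, ⟨fun _ => hz, tendsto_const_nhds⟩, rfl⟩

theorem finite_setOf_apply_eq [T1Space X] {u : ℕ → X} (hu : u ∈ backwardOrbits T z) {x : X}
    (hx : x ≠ z) : {n | u n = x}.Finite := by
  have := hu.2.eventually_ne hx.symm
  rw [← Nat.cofinite_eq_atTop] at this
  simpa using this

theorem tendsto_iterate_of_descent {r : (ℕ → X) → (ℕ → X) → Prop} [IsWellOrder (ℕ → X) r]
    {S : X → X} {P : X → Prop} (hP : ∀ x, P x → P (S x)) (μ : X → ℕ → X) (ν : X → ℕ)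
    (hμν : ∀ x, P x → μ x (ν x) = x) (hlim : ∀ x, P x → Tendsto (μ x) atTop (𝓝 z))
    (hμ : ∀ x, P x → ¬ r (μ x) (μ (S x))) (hν : ∀ x, P x → μ (S x) = μ x → ν x < ν (S x))
    {x : X} (hx : P x) : Tendsto (fun n => S^[n] x) atTop (𝓝 z) := by
  suffices ∀ u x, P x → μ x = u → Tendsto (fun n => S^[n] x) atTop (𝓝 z) from this _ x hx rfl
  intro u
  induction u using IsWellFounded.induction r with | _ u ih => ?_
  rintro x hx rfl
  have horb : ∀ k, P (S^[k] x) := fun k => by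
    induction k with
    | zero => exact hx
    | succ k ihk => rw [iterate_succ_apply']; exact hP _ ihk
  by_cases hstay : ∀ k, μ (S^[k] x) = μ x
  · have hmono : StrictMono fun k => ν (S^[k] x) := strictMono_nat_of_lt_succ fun k => by
      simp only [iterate_succ_apply']
      exact hν _ (horb k) (by rw [← iterate_succ_apply' S, hstay, hstay])
    refine ((hlim x hx).comp hmono.tendsto_atTop).congr fun k => ?_
    simp only [comp_apply]
    rw [← hstay k, hμν _ (horb k)]
  · classical
    simp only [not_forall] at hstay
    have hleave := Nat.find_spec hstay
    have hstay_before := fun m (hm : m < Nat.find hstay) => not_not.1 (Nat.find_min hstay hm)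
    obtain ⟨j, hj⟩ : ∃ j, Nat.find hstay = j + 1 := Nat.exists_eq_succ_of_ne_zero fun h0 => by
      rw [h0] at hleave; exact hleave rfl
    rw [hj] at hleave hstay_before
    have hlt : r (μ (S^[j + 1] x)) (μ x) := by
      rcases trichotomous_of r (μ (S^[j + 1] x)) (μ x) with h | h | h
      · exact h
      · exact absurd h hleave
      · rw [iterate_succ_apply', ← hstay_before j j.lt_succ_self] at h
        exact absurd h (hμ _ (horb j))
    refine (tendsto_add_atTop_iff_nat (j + 1)).1 ?_
    simpa only [iterate_add_apply] using ih _ hlt _ (horb (j + 1)) rfl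

theorem exists_rightInverse_on_unstableSet [T1Space X] (hz : T z = z) :
    ∃ S : X → X, MapsTo S (unstableSet T z) (unstableSet T z) ∧
      LeftInvOn T S (unstableSet T z) ∧
      ∀ x ∈ unstableSet T z, Tendsto (fun n => S^[n] x) atTop (𝓝 z) := by
  classical
  have : Nonempty X := ⟨z⟩
  set W := unstableSet T z
  have hmin : ∀ x ∈ W, x ≠ z → ∃ u ∈ backwardOrbits T z, x ∈ range u ∧
      ∀ v ∈ backwardOrbits T z, x ∈ range v → ¬ WellOrderingRel v u := by
    rintro _ ⟨u, hu, rfl⟩ -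
    obtain ⟨v, ⟨hv, hxv⟩, hvmin⟩ := (IsWellFounded.wf (r := WellOrderingRel)).has_min
      {v | v ∈ backwardOrbits T z ∧ u 0 ∈ range v} ⟨u, hu, 0, rfl⟩
    exact ⟨v, hv, hxv, fun w hw hxw => hvmin w ⟨hw, hxw⟩⟩
  choose! μ hμ hxμ hμmin using hmin
  have hlast : ∀ x ∈ W, x ≠ z → ∃ N, μ x N = x ∧ ∀ n, μ x n = x → n ≤ N := by
    intro x hx hxz
    obtain ⟨N, hN, hmax⟩ := exists_max_image _ id
      (finite_setOf_apply_eq (hμ x hx hxz) hxz) (hxμ x hx hxz)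
    exact ⟨N, hN, hmax⟩
  choose! ν hν hνmax using hlast
  let S x := if x ∈ W ∧ x ≠ z then μ x (ν x + 1) else z
  have hS : ∀ x, x ∈ W ∧ x ≠ z → S x = μ x (ν x + 1) := fun x hx => if_pos hx
  have hSz : S z = z := if_neg fun h => h.2 rfl
  have hTS : ∀ x, x ∈ W ∧ x ≠ z → T (S x) = x := fun x hx => by
    rw [hS x hx, (hμ x hx.1 hx.2).1, hν x hx.1 hx.2]
  have hSW : ∀ x, x ∈ W ∧ x ≠ z → S x ∈ W ∧ S x ≠ z := fun x hx =>
    ⟨hS x hx ▸ apply_mem_unstableSet (hμ x hx.1 hx.2) _,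
      fun h => hx.2 (by rw [← hTS x hx, h, hz])⟩
  have key : ∀ x ∈ W, S x ∈ W ∧ T (S x) = x ∧ Tendsto (fun n => S^[n] x) atTop (𝓝 z) := by
    intro x hx
    rcases eq_or_ne x z with rfl | hxz
    · exact ⟨by rw [hSz]; exact mem_unstableSet_self hz, by rw [hSz, hz],
        by simp only [iterate_fixed hSz, tendsto_const_nhds]⟩
    refine ⟨(hSW x ⟨hx, hxz⟩).1, hTS x ⟨hx, hxz⟩, tendsto_iterate_of_descent
      (r := WellOrderingRel) hSW μ ν (fun x hx => hν x hx.1 hx.2)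
      (fun x hx => (hμ x hx.1 hx.2).2) (fun x hx => ?_) (fun x hx hμx => ?_) ⟨hx, hxz⟩⟩
    · exact hμmin (S x) (hSW x hx).1 (hSW x hx).2 _ (hμ x hx.1 hx.2) ⟨_, (hS x hx).symm⟩
    · exact hνmax (S x) (hSW x hx).1 (hSW x hx).2 _ (by rw [hμx, hS x hx])
  exact ⟨S, fun x hx => (key x hx).1, fun x hx => (key x hx).2.1, fun x hx => (key x hx).2.2⟩

theorem exists_kitai_of_dense_stableSet_inter_unstableSet [T1Space X] (hz : T z = z)
    (hD : Dense (stableSet T z ∩ unstableSet T z)) :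
    ∃ X₀ : Set X, Dense X₀ ∧ ∃ S : X → X, (∀ x ∈ X₀, S x ∈ X₀) ∧
      ∀ x ∈ X₀, Tendsto (fun n => T^[n] x) atTop (𝓝 z) ∧
        Tendsto (fun n => S^[n] x) atTop (𝓝 z) ∧ T (S x) = x := by
  obtain ⟨S, hSW, hTS, hS⟩ := exists_rightInverse_on_unstableSet hz
  refine ⟨_, hD, S, fun x hx => ⟨?_, hSW hx.2⟩, fun x hx => ⟨hx.1, hS x hx.2, hTS hx.2⟩⟩
  refine (tendsto_add_atTop_iff_nat 1).1 ?_
  simp only [iterate_succ_apply, hTS hx.2]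
  exact hx.1

end BackwardOrbits

theorem iterate_apply_add_of_apply_add_one {X : Type*} {T : X → X} {o : ℤ → X}
    (ho : ∀ n, T (o (n + 1)) = o n) (k : ℕ) (n : ℤ) : T^[k] (o (n + k)) = o n := by
  induction k with
  | zero => simp
  | succ k ih => rw [iterate_succ_apply, Nat.cast_succ, ← add_assoc, ho, ih]

section TwoSidedOrbit

variable {X : Type*} {T S : X → X} {X₀ : Set X}

def twoSidedOrbit (T S : X → X) (a : X) : ℤ → X
  | Int.ofNat n => S^[n] a
  | Int.negSucc n => T^[n + 1] a

theorem Set.LeftInvOn.iterate (hTS : LeftInvOn T S X₀) (hS : MapsTo S X₀ X₀) (n : ℕ) :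
    LeftInvOn T^[n] S^[n] X₀ := by
  induction n with
  | zero => exact fun _ _ => rfl
  | succ n ih =>
    intro x hx
    rw [iterate_succ_apply, iterate_succ_apply', hTS (hS.iterate n hx), ih hx]

theorem apply_twoSidedOrbit_add_one (hS : MapsTo S X₀ X₀) (hTS : LeftInvOn T S X₀) {a : X}
    (ha : a ∈ X₀) : ∀ n, T (twoSidedOrbit T S a (n + 1)) = twoSidedOrbit T S a n
  | Int.ofNat n => by
    change T (S^[n + 1] a) = S^[n] a
    rw [iterate_succ_apply', hTS (hS.iterate n ha)]
  | Int.negSucc 0 => rfl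
  | Int.negSucc (n + 1) => (iterate_succ_apply' T (n + 1) a).symm

theorem tendsto_twoSidedOrbit [TopologicalSpace X] {a z : X}
    (hT : Tendsto (fun n => T^[n] a) atTop (𝓝 z)) (hS : Tendsto (fun n => S^[n] a) atTop (𝓝 z)) :
    Tendsto (twoSidedOrbit T S a) cofinite (𝓝 z) := by
  rw [← tendsto_add_atTop_iff_nat 1] at hT
  rw [← Nat.cofinite_eq_atTop] at hT hS
  intro s hs
  refine ((hS hs).image Int.ofNat |>.union ((hT hs).image Int.negSucc)).subset ?_
  rintro (n | n) hn
  exacts [Or.inl ⟨n, hn, rfl⟩, Or.inr ⟨n, hn, rfl⟩]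

end TwoSidedOrbit

theorem Int.exists_pos_forall_dvd_of_eventually_cofinite {P : ℤ → Prop}
    (h : ∀ᶠ n in cofinite, P n) : ∃ d : ℕ, 0 < d ∧ ∀ n ≠ 0, (d : ℤ) ∣ n → P n := by
  obtain ⟨M, hM⟩ := (h.image Int.natAbs).bddAbove
  refine ⟨M + 1, M.succ_pos, fun n hn hdvd => by_contra fun hPn => ?_⟩
  have h1 : n.natAbs ≤ M := hM ⟨n, hPn, rfl⟩
  have h2 := Int.natAbs_le_of_dvd_ne_zero hdvd hn
  omega

section BilateralShift

open c0Sum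

variable {X : Type*} [NormedAddCommGroup X] [NormedSpace ℝ X]

def IsBilateralShift (T : X →L[ℝ] X) (B : c0Sum (fun _ : ℤ => X) →L[ℝ] c0Sum (fun _ : ℤ => X)) :
    Prop :=
  ∀ x n, B x n = T (x (n + 1))

variable {T : X →L[ℝ] X} {B : c0Sum (fun _ : ℤ => X) →L[ℝ] c0Sum (fun _ : ℤ => X)}

theorem IsBilateralShift.iterate_apply (hB : IsBilateralShift T B) (k : ℕ)
    (x : c0Sum (fun _ : ℤ => X)) (n : ℤ) : (B^[k] x) n = T^[k] (x (n + k)) := by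
  induction k generalizing x with
  | zero => simp
  | succ k ih =>
    rw [iterate_succ_apply, ih, hB, ← iterate_succ_apply, Nat.cast_succ, add_assoc]

theorem IsBilateralShift.iterate_single (hB : IsBilateralShift T B) (k : ℕ) (i : ℤ) (a : X) :
    B^[k] (single i a) = single (i - k) (T^[k] a) := by
  ext n
  rw [hB.iterate_apply, single_apply, single_apply]
  by_cases hn : n = i - k
  · simp [hn]
  · rw [Pi.single_eq_of_ne hn, Pi.single_eq_of_ne (by omega), iterate_map_zero]

def periodization (o : ℤ → X) (ho : Tendsto o cofinite (𝓝 0)) (d : ℕ) (i : ℤ) :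
    c0Sum (fun _ : ℤ => X) :=
  mk (fun m => if (d : ℤ) ∣ m - i then o (m - i) else 0) <| by
    refine squeeze_zero (fun _ => norm_nonneg _) (fun m => ?_)
      (tendsto_zero_iff_norm_tendsto_zero.1
        (ho.comp (sub_left_injective : Injective fun m : ℤ => m - i).tendsto_cofinite))
    split_ifs <;> simp

theorem norm_periodization_sub_single_le {o : ℤ → X} (ho : Tendsto o cofinite (𝓝 0)) {d : ℕ}
    (i : ℤ) {δ : ℝ} (hδ : 0 ≤ δ) (h : ∀ n ≠ 0, (d : ℤ) ∣ n → ‖o n‖ ≤ δ) :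
    ‖periodization o ho d i - single i (o 0)‖ ≤ δ := by
  refine norm_le_of_forall_le hδ fun m => ?_
  rw [c0Sum.sub_apply, periodization, mk_apply, single_apply]
  by_cases hm : m = i
  · simp [hm, hδ]
  · rw [Pi.single_eq_of_ne hm, sub_zero]
    split_ifs with hdvd
    exacts [h _ (sub_ne_zero.2 hm) hdvd, by simpa using hδ]

theorem IsBilateralShift.isPeriodicPt_periodization (hB : IsBilateralShift T B) {o : ℤ → X}
    (hstep : ∀ n, T (o (n + 1)) = o n) (ho : Tendsto o cofinite (𝓝 0)) (d : ℕ) (i : ℤ) :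
    IsPeriodicPt B d (periodization o ho d i) := by
  ext m
  simp only [hB.iterate_apply, periodization, mk_apply, add_sub_right_comm m, dvd_add_self_right]
  split_ifs
  exacts [iterate_apply_add_of_apply_add_one hstep d _, iterate_map_zero T d]

theorem IsBilateralShift.single_mem_closure_periodicPts (hB : IsBilateralShift T B) {o : ℤ → X}
    (hstep : ∀ n, T (o (n + 1)) = o n) (ho : Tendsto o cofinite (𝓝 0)) (i : ℤ) :
    single i (o 0) ∈ closure (periodicPts B) := by
  refine Metric.mem_closure_iff.2 fun ε hε => ?_
  obtain ⟨d, hd, hsmall⟩ := Int.exists_pos_forall_dvd_of_eventually_cofinite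
    ((tendsto_zero_iff_norm_tendsto_zero.1 ho).eventually (gt_mem_nhds (half_pos hε)))
  refine ⟨periodization o ho d i, ⟨d, hd, hB.isPeriodicPt_periodization hstep ho d i⟩, ?_⟩
  rw [dist_comm, dist_eq_norm]
  exact (norm_periodization_sub_single_le ho i (half_pos hε).le
    fun n hn hdvd => (hsmall n hn hdvd).le).trans_lt (half_lt_self hε)

theorem IsBilateralShift.single_mem_kitaiVectors (hB : IsBilateralShift T B) {S : X → X} {a : X}
    (hTa : Tendsto (fun n => T^[n] a) atTop (𝓝 0)) (hSa : Tendsto (fun n => S^[n] a) atTop (𝓝 0))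
    (hTS : ∀ n, T^[n] (S^[n] a) = a) (i : ℤ) : single i a ∈ kitaiVectors B := by
  refine ⟨?_, fun n => single (i + n) (S^[n] a), ?_, fun n => ?_⟩
  · rw [tendsto_zero_iff_norm_tendsto_zero] at hTa ⊢
    simpa only [hB.iterate_single, norm_single] using hTa
  · rw [tendsto_zero_iff_norm_tendsto_zero] at hSa ⊢
    simpa only [norm_single] using hSa
  · rw [hB.iterate_single, add_sub_cancel_right, hTS]

theorem IsBilateralShift.apply_zero_mem_of_isPeriodicPt (hB : IsBilateralShift T B) {d : ℕ}
    {p : c0Sum (fun _ : ℤ => X)} (hp : IsPeriodicPt B d p) (hd : 0 < d) :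
    p 0 ∈ stableSet T 0 ∩ unstableSet T 0 := by
  obtain ⟨e, rfl⟩ : ∃ e, d = e + 1 := Nat.exists_eq_succ_of_ne_zero hd.ne'
  have hcast : Tendsto (fun k : ℕ => (k : ℤ)) atTop cofinite :=
    tendsto_natCast_atTop_atTop.mono_right atTop_le_cofinite
  refine ⟨?_, fun k => (B^[e * k] p) k, ⟨fun k => ?_, ?_⟩, by simp⟩
  · refine tendsto_zero_iff_norm_tendsto_zero.2 <|
      (tendsto_norm_apply_iterate_of_isPeriodicPt hp hd id (n := fun k => -(k : ℤ))
        ((tendsto_neg_atTop_atBot.comp tendsto_natCast_atTop_atTop).mono_right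
          atBot_le_cofinite)).congr fun k => ?_
    simp [hB.iterate_apply]
  · change T ((B^[e * (k + 1)] p) ((k + 1 : ℕ) : ℤ)) = (B^[e * k] p) k
    rw [Nat.cast_succ, ← hB, ← iterate_succ_apply' B, Nat.succ_eq_add_one,
      show e * (k + 1) + 1 = e * k + (e + 1) by ring, iterate_add_apply, hp.eq]
  · exact tendsto_zero_iff_norm_tendsto_zero.2
      (tendsto_norm_apply_iterate_of_isPeriodicPt hp hd (e * ·) hcast)

theorem IsBilateralShift.dense_stableSet_inter_unstableSet (hB : IsBilateralShift T B)
    (hper : Dense (periodicPts B)) : Dense (stableSet T 0 ∩ unstableSet T 0) := by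
  refine Metric.dense_iff.2 fun a ε hε => ?_
  obtain ⟨p, ⟨d, hd, hp⟩, hpa⟩ := hper.exists_dist_lt (single 0 a) hε
  refine ⟨p 0, ?_, hB.apply_zero_mem_of_isPeriodicPt hp hd⟩
  rw [Metric.mem_ball, dist_eq_norm]
  calc ‖p 0 - a‖ = ‖(p - single 0 a : c0Sum (fun _ : ℤ => X)) 0‖ := by simp
    _ ≤ ‖p - single 0 a‖ := norm_apply_le _ _
    _ < ε := by rwa [← dist_eq_norm, dist_comm]

end BilateralShift

/-- the bilateral shift `B_T` is chaotic on `c₀(X,ℤ)` iff `T` satisfies the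
Kitai Criterion with `X₀ = Y₀`: a dense set `X₀` and a map `S : X₀ → X₀` with `T^n x → 0`,
`S^n x → 0` and `TSx = x` for all `x ∈ X₀`. -/
theorem stmt_15 {X : Type*} [NormedAddCommGroup X] [NormedSpace ℝ X] [CompleteSpace X]
    [TopologicalSpace.SeparableSpace X] (T : X →L[ℝ] X) :
    ∀ B : c0Sum (fun _ : ℤ => X) →L[ℝ] c0Sum (fun _ : ℤ => X),
      (∀ (x : c0Sum (fun _ : ℤ => X)) (n : ℤ),
        ((B x : lp (fun _ : ℤ => X) ∞) : ℤ → X) n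
          = T (((x : lp (fun _ : ℤ => X) ∞) : ℤ → X) (n + 1))) →
      (Chaotic ⇑B ↔
        ∃ X₀ : Set X, Dense X₀ ∧ ∃ S : X → X, (∀ x ∈ X₀, S x ∈ X₀) ∧
          ∀ x ∈ X₀,
            Tendsto (fun n : ℕ => (⇑T)^[n] x) atTop (nhds 0)
            ∧ Tendsto (fun n : ℕ => S^[n] x) atTop (nhds 0)
            ∧ T (S x) = x) := by
  intro B hB
  replace hB : IsBilateralShift T B := hB
  rw [chaotic_iff]
  constructor
  · rintro ⟨-, hper⟩
    exact exists_kitai_of_dense_stableSet_inter_unstableSet (map_zero T)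
      (hB.dense_stableSet_inter_unstableSet hper)
  · rintro ⟨X₀, hX₀, S, hS, hK⟩
    have hTS : LeftInvOn T S X₀ := fun x hx => (hK x hx).2.2
    have hG := c0Sum.dense_addSubmonoidClosure_single (E := fun _ : ℤ => X) fun _ => hX₀
    have hkitai : AddSubmonoid.closure (⋃ i, c0Sum.single i '' X₀) ≤ kitaiVectors B :=
      AddSubmonoid.closure_le.2 <| iUnion_subset fun i => image_subset_iff.2 fun a ha =>
        hB.single_mem_kitaiVectors (hK a ha).1 (hK a ha).2.1 (fun n => hTS.iterate hS n ha) i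
    have hper : AddSubmonoid.closure (⋃ i, c0Sum.single i '' X₀) ≤
        (periodicPtsAddSubmonoid B).topologicalClosure :=
      AddSubmonoid.closure_le.2 <| iUnion_subset fun i => image_subset_iff.2 fun a ha =>
        hB.single_mem_closure_periodicPts (apply_twoSidedOrbit_add_one hS hTS ha)
          (tendsto_twoSidedOrbit (hK a ha).1 (hK a ha).2.1) i
    exact ⟨.of_topologicallyTransitive B.continuous
      (.of_dense_kitaiVectors (hG.mono hkitai)), dense_closure.1 (hG.mono hper)⟩
end
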